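/- If G is a connected bipartite cactus in which every edge belongs to a cycle, then γ₂(G) ≤ a(G) + 1. -/

import Mathlib

open Classical Finset
noncomputable section

/-- `S` is a 2-dominating set of `G`: every vertex outside `S` has ≥ 2 neighbors in `S`. -/
def IsTwoDomSet {V : Type*} [Fintype V] (G : SimpleGraph V) (S : Finset V) : Prop :=
  ∀ v, v ∉ S → 2 ≤ (G.neighborFinset v ∩ S).card

/-- The 2-domination number. -/
noncomputable def gamma2 {V : Type*} [Fintype V] (G : SimpleGraph V) : ℕ :=
  sInf {k | ∃ S : Finset V, IsTwoDomSet G S ∧ S.card = k}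

/-- `S` is an annihilation set of `G`: the sum of degrees over `S` is at most `m(G)`. -/
def IsAnnSet {V : Type*} [Fintype V] (G : SimpleGraph V) (S : Finset V) : Prop :=
  ∑ v ∈ S, G.degree v ≤ G.edgeFinset.card

/-- The annihilation number: the largest size of an annihilation set (equivalently, the
largest `k` such that the sum of the `k` smallest degrees is at most the edge count). -/
noncomputable def annihilation {V : Type*} [Fintype V] (G : SimpleGraph V) : ℕ :=
  sSup {k | ∃ S : Finset V, IsAnnSet G S ∧ S.card = k}

/-- A cactus: a connected graph whose cycles are pairwise edge-disjoint
(two cycles either have the same edge set or share no edge). -/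
def IsCactus {V : Type*} (G : SimpleGraph V) : Prop :=
  G.Connected ∧ ∀ (u v : V) (p : G.Walk u u) (q : G.Walk v v),
    p.IsCycle → q.IsCycle →
      (p.edges.toFinset = q.edges.toFinset ∨ ∀ e ∈ p.edges, e ∉ q.edges)

/-- The distance between two cycles (given as closed walks): the minimum distance
between a vertex of one and a vertex of the other. -/
noncomputable def cycDist {V : Type*} (G : SimpleGraph V) {u v : V}
    (c : G.Walk u u) (d : G.Walk v v) : ℕ :=
  sInf {n | ∃ y ∈ c.support, ∃ z ∈ d.support, G.dist y z = n}

/-- `x` is an exit vertex of the cycle `c`: it realizes the distance from `c`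
to some other cycle of `G`. -/
def IsExit {V : Type*} (G : SimpleGraph V) {u : V} (c : G.Walk u u) (x : V) : Prop :=
  x ∈ c.support ∧ ∃ (w : V) (d : G.Walk w w), d.IsCycle ∧
    d.edges.toFinset ≠ c.edges.toFinset ∧ ∃ z ∈ d.support, G.dist x z = cycDist G c d

/-- An outer cycle: a cycle with at most one exit vertex. -/
def IsOuterCycle {V : Type*} (G : SimpleGraph V) {u : V} (c : G.Walk u u) : Prop :=
  c.IsCycle ∧ ∀ x y, IsExit G c x → IsExit G c y → x = y

/-- There is a sun at the cycle `c`: at every vertex of `c` except one (the exit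
vertex, if there is one) there is exactly one pendant vertex attached and no other
tree, i.e. the vertex has degree 3 and a unique leaf neighbor. -/
def HasSunAt {V : Type*} [Fintype V] (G : SimpleGraph V) {u : V} (c : G.Walk u u) : Prop :=
  ∃ x ∈ c.support, (∀ y, IsExit G c y → y = x) ∧
    ∀ v ∈ c.support, v ≠ x →
      G.degree v = 3 ∧ ∃! w, G.Adj v w ∧ G.degree w = 1

/-!
Colour `G` with two colours and let `S` be one colour class together with the isolated
vertices. `S` is independent, so every edge meets it at most once and its degree sum is at
most `|E|`: thus `|S| ≤ a(G)`. A vertex outside `S` has a neighbour, so it lies on a cycle and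
has degree at least 2, and all its neighbours are in `S`: thus `S` is 2-dominating and
`γ₂(G) ≤ |S|`.
-/

lemma gamma2_le_card {V : Type*} [Fintype V] {G : SimpleGraph V} {S : Finset V}
    (hS : IsTwoDomSet G S) : gamma2 G ≤ S.card :=
  Nat.sInf_le ⟨S, hS, rfl⟩

lemma card_le_annihilation {V : Type*} [Fintype V] {G : SimpleGraph V} {S : Finset V}
    (hS : IsAnnSet G S) : S.card ≤ annihilation G :=
  le_csSup ⟨Fintype.card V, by rintro k ⟨T, -, rfl⟩; exact T.card_le_univ⟩ ⟨S, hS, rfl⟩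

namespace SimpleGraph

variable {V : Type*} [Fintype V] {G : SimpleGraph V}

lemma Walk.IsCycle.two_le_degree {u v : V} {c : G.Walk u u} (hc : c.IsCycle)
    (hv : v ∈ c.support) : 2 ≤ G.degree v := by
  rw [← hc.ncard_neighborSet_toSubgraph_eq_two hv, ← card_neighborFinset_eq_degree,
    ← Set.ncard_coe_finset, coe_neighborFinset]
  exact Set.ncard_le_ncard (c.toSubgraph.neighborSet_subset v)

lemma two_le_degree_of_adj_of_forall_mem_cycle
    (hedge : ∀ e ∈ G.edgeSet, ∃ (u : V) (c : G.Walk u u), c.IsCycle ∧ e ∈ c.edges)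
    {v w : V} (hvw : G.Adj v w) : 2 ≤ G.degree v := by
  obtain ⟨u, c, hc, he⟩ := hedge s(v, w) hvw
  exact hc.two_le_degree (c.fst_mem_support_of_mem_edges he)

/-- Each edge is incident to at most one vertex of an independent set. -/
lemma IsIndepSet.sum_degree_le_card_edgeFinset {S : Finset V} (hS : G.IsIndepSet S) :
    ∑ v ∈ S, G.degree v ≤ G.edgeFinset.card := by
  simp_rw [← card_incidenceFinset_eq_degree]
  rw [← card_biUnion]
  · refine card_le_card fun e he => ?_
    obtain ⟨v, -, hev⟩ := mem_biUnion.mp he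
    exact mem_edgeFinset.mpr ((mem_incidenceFinset _ _ _).mp hev).1
  · intro x hx y hy hxy
    show Disjoint (G.incidenceFinset x) (G.incidenceFinset y)
    refine Finset.disjoint_left.mpr fun e hex hey => ?_
    rw [mem_incidenceFinset] at hex hey
    obtain rfl : e = s(x, y) := (Sym2.mem_and_mem_iff hxy).mp ⟨hex.2, hey.2⟩
    exact hS hx hy hxy hex.1

lemma isTwoDomSet_of_forall_notMem {S : Finset V}
    (h : ∀ v ∉ S, 2 ≤ G.degree v ∧ G.neighborFinset v ⊆ S) : IsTwoDomSet G S := by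
  intro v hv
  rw [inter_eq_left.mpr (h v hv).2, card_neighborFinset_eq_degree]
  exact (h v hv).1

end SimpleGraph

namespace SimpleGraph.Coloring

variable {V α : Type*} [Fintype V] {G : SimpleGraph V}

lemma isIndepSet_colorClass_union_isolated [DecidableEq α] (C : G.Coloring α) (a : α) :
    G.IsIndepSet ↑(univ.filter fun v => C v = a ∨ G.degree v = 0) := by
  intro v hv w hw _ hvw
  simp only [coe_filter, mem_univ, true_and, Set.mem_ofPred_eq, degree_eq_zero] at hv hw
  rcases hv with hv | hv
  · rcases hw with hw | hw
    · exact C.valid hvw (hv.trans hw.symm)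
    · exact hw v hvw.symm
  · exact hv w hvw

end SimpleGraph.Coloring

theorem stmt17_general {V : Type*} [Fintype V] (G : SimpleGraph V)
    (hbip : G.Colorable 2)
    (hedge : ∀ e ∈ G.edgeSet, ∃ (u : V) (c : G.Walk u u), c.IsCycle ∧ e ∈ c.edges) :
    gamma2 G ≤ annihilation G + 1 := by
  obtain ⟨C⟩ := hbip
  set S := univ.filter fun v => C v = 0 ∨ G.degree v = 0
  have hdom : IsTwoDomSet G S := by
    refine SimpleGraph.isTwoDomSet_of_forall_notMem fun v hv => ?_
    simp only [S, mem_filter, mem_univ, true_and, not_or] at hv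
    obtain ⟨w, hvw⟩ := (G.degree_pos_iff_exists_adj v).mp (Nat.pos_of_ne_zero hv.2)
    refine ⟨SimpleGraph.two_le_degree_of_adj_of_forall_mem_cycle hedge hvw, fun u hu => ?_⟩
    have hCu := C.valid ((G.mem_neighborFinset v u).mp hu)
    simp only [S, mem_filter, mem_univ, true_and]
    omega
  have hann : IsAnnSet G S :=
    (C.isIndepSet_colorClass_union_isolated 0).sum_degree_le_card_edgeFinset
  calc gamma2 G ≤ S.card := gamma2_le_card hdom
    _ ≤ annihilation G := card_le_annihilation hann
    _ ≤ annihilation G + 1 := Nat.le_succ _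

/-- Proposition 1.2 (Jakovac): a connected bipartite cactus in which every edge lies on a
cycle satisfies `γ₂(G) ≤ a(G) + 1`. -/
theorem stmt17 {V : Type*} [Fintype V] (G : SimpleGraph V)
    (hcac : IsCactus G) (hbip : G.Colorable 2)
    (hedge : ∀ e ∈ G.edgeSet, ∃ (u : V) (c : G.Walk u u), c.IsCycle ∧ e ∈ c.edges) :
    gamma2 G ≤ annihilation G + 1 :=
  stmt17_general G hbip hedge
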